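/- Let R be a commutative ring with unity in which every non-Jacobson element is contained in only finitely many maximal ideals. Let k ∈ ℕ and I_1,…,I_k be mutually co-maximal ideals of R. Then there exist elements q_i ∈ I_i for 1 ≤ i ≤ k such that (q_i) + (q_j) = R for all 1 ≤ i ≠ j ≤ k. -/
import Mathlib


/-- Let `R` be a commutative ring with unity in which every non-Jacobson
element (an element outside some maximal ideal) is contained in only finitely many maximal
ideals. Let `I_1, …, I_k` be mutually co-maximal ideals of `R`. Then there exist
`q_i ∈ I_i` such that `(q_i) + (q_j) = R` for all `i ≠ j`. -/
theorem exists_comaximal_elements {R : Type*} [CommRing R]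
    (hnj : ∀ x : R, (∃ M : Ideal R, M.IsMaximal ∧ x ∉ M) →
      {M : Ideal R | M.IsMaximal ∧ x ∈ M}.Finite)
    (k : ℕ) (I : Fin k → Ideal R)
    (hcomax : ∀ i j, i ≠ j → I i + I j = ⊤) :
    ∃ q : Fin k → R, (∀ i, q i ∈ I i) ∧
      ∀ i j, i ≠ j → Ideal.span {q i} + Ideal.span {q j} = ⊤ := by
  classical
  by_cases h1 : ∃ j, ∀ l, l ≠ j → I l = ⊤
  · -- degenerate case: all ideals except possibly one are the whole ring
    obtain ⟨j, hj⟩ := h1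
    refine ⟨fun l => if l = j then 0 else 1, fun i => ?_, fun i i' hne => ?_⟩
    · by_cases h : i = j
      · simp [h]
      · simp [h, hj i h]
    · rcases ne_or_eq i j with hij | rfl
      · have : Ideal.span ({if i = j then (0:R) else 1} : Set R) = ⊤ := by
          simp [hij, Ideal.span_singleton_one]
        rw [this, Ideal.add_eq_sup, top_sup_eq]
      · have hi'j : i' ≠ i := fun h => hne h.symm
        have : Ideal.span ({if i' = i then (0:R) else 1} : Set R) = ⊤ := by
          simp [hi'j, Ideal.span_singleton_one]
        rw [this, Ideal.add_eq_sup, sup_top_eq]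
  · push_neg at h1
    -- h1 : ∀ j, ∃ l, l ≠ j ∧ I l ≠ ⊤
    have hpc : Pairwise fun i j => IsCoprime (I i) (I j) := by
      intro i j hij
      rw [Ideal.isCoprime_iff_sup_eq, ← Ideal.add_eq_sup]
      exact hcomax i j hij
    -- CRT elements: c i ∈ I i and c i ≡ 1 mod I j for j ≠ i
    have hcex : ∀ i : Fin k, ∃ c : R,
        ∀ j, c - (if j = i then (0:R) else 1) ∈ I j := fun i =>
      Ideal.exists_forall_sub_mem_ideal hpc _
    choose c hc using hcex
    have hcmem : ∀ i, c i ∈ I i := by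
      intro i
      have := hc i i
      simpa using this
    have hcone : ∀ i j, j ≠ i → c i - 1 ∈ I j := by
      intro i j hji
      have := hc i j
      simpa [hji] using this
    -- the intersection of all the ideals
    set P : Ideal R := Finset.univ.inf I with hP
    have hPle : ∀ i, P ≤ I i := fun i => Finset.inf_le (Finset.mem_univ i)
    -- key induction
    have key : ∀ s : Finset (Fin k), ∃ q : Fin k → R,
        (∀ i ∈ s, q i ∈ I i ∧ ∀ j, j ≠ i → q i - 1 ∈ I j) ∧
        ∀ i ∈ s, ∀ j ∈ s, i ≠ j →
          Ideal.span {q i} + Ideal.span {q j} = ⊤ := by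
      intro s
      induction s using Finset.induction_on with
      | empty => exact ⟨fun _ => 0, by simp, by simp⟩
      | @insert a s ha ih =>
        obtain ⟨q, hmem, hpair⟩ := ih
        -- the set of maximal ideals containing some q j, j ∈ s
        set F : Set (Ideal R) := ⋃ j ∈ s, {M : Ideal R | M.IsMaximal ∧ q j ∈ M} with hF
        have hFfin : F.Finite := by
          refine Set.Finite.biUnion s.finite_toSet fun j hj => ?_
          obtain ⟨l, hlj, hlt⟩ := h1 j
          obtain ⟨M₀, hM₀max, hM₀le⟩ := Ideal.exists_le_maximal _ hlt
          refine hnj (q j) ⟨M₀, hM₀max, fun hqM => ?_⟩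
          have h1mem : (1 : R) ∈ M₀ := by
            have hsub : q j - 1 ∈ M₀ := hM₀le ((hmem j hj).2 l hlj)
            have := M₀.sub_mem hqM hsub
            simpa using this
          exact hM₀max.ne_top (Ideal.eq_top_iff_one M₀ |>.mpr h1mem)
        have hF2fin : {M : Ideal R | M ∈ F ∧ ¬ P ≤ M}.Finite :=
          hFfin.subset fun M hM => hM.1
        set F2 : Finset (Ideal R) := hF2fin.toFinset with hF2
        have hF2mem : ∀ M ∈ F2, M ∈ F ∧ ¬ P ≤ M := by
          intro M hM
          rwa [hF2, Set.Finite.mem_toFinset] at hM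
        have hFmax : ∀ M ∈ F, M.IsMaximal := by
          intro M hM
          rw [hF] at hM
          simp only [Set.mem_iUnion, Set.mem_setOf_eq] at hM
          obtain ⟨j, _, hMmax, _⟩ := hM
          exact hMmax
        -- choose t ∈ P with t ≡ 1 - c a mod each M ∈ F2
        have htex : ∃ t : R, ∀ o : Option {M // M ∈ F2},
            t - (Option.elim o (0:R) (fun _ => 1 - c a)) ∈
              Option.elim o P (fun M => M.1) := by
          have hPcop : ∀ M ∈ F2, IsCoprime P M := by
            intro M hM
            have h2 := hF2mem M hM
            have hmax := hFmax M h2.1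
            rw [Ideal.isCoprime_iff_sup_eq, sup_comm]
            by_contra hne'
            have heq : M = M ⊔ P := hmax.eq_of_le hne' le_sup_left
            exact h2.2 (le_sup_right.trans heq.ge)
          refine Ideal.exists_forall_sub_mem_ideal ?_ _
          rintro (_ | ⟨M, hM⟩) (_ | ⟨M', hM'⟩) hne
          · exact absurd rfl hne
          · exact hPcop M' hM'
          · exact (hPcop M hM).symm
          · have hMM' : (M : Ideal R) ≠ M' := fun h => hne (by subst h; rfl)
            exact Ideal.isCoprime_iff_sup_eq.mpr
              ((hFmax M (hF2mem M hM).1).coprime_of_ne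
                (hFmax M' (hF2mem M' hM').1) hMM')
        obtain ⟨t, ht⟩ := htex
        have htP : t ∈ P := by simpa using ht none
        have htM : ∀ M ∈ F2, t - (1 - c a) ∈ M := fun M hM => ht (some ⟨M, hM⟩)
        -- the new element
        set qa : R := c a + t with hqa
        refine ⟨Function.update q a qa, ?_, ?_⟩
        · intro i hi
          rcases Finset.mem_insert.mp hi with rfl | his
          · rw [Function.update_self]
            constructor
            · exact Ideal.add_mem _ (hcmem i) (hPle i htP)
            · intro j hji
              have : qa - 1 = (c i - 1) + t := by ring
              rw [this]
              exact Ideal.add_mem _ (hcone i j hji) (hPle j htP)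
          · have hia : i ≠ a := fun h => ha (h ▸ his)
            rw [Function.update_of_ne hia]
            exact hmem i his
        · -- pairwise comaximality
          have main : ∀ j ∈ s, Ideal.span {qa} + Ideal.span {q j} = ⊤ := by
            intro j hjs
            by_contra hne'
            obtain ⟨M, hMmax, hMle⟩ := Ideal.exists_le_maximal _ hne'
            rw [Ideal.add_eq_sup] at hMle
            have hqaM : qa ∈ M :=
              (le_sup_left.trans hMle) (Ideal.mem_span_singleton_self qa)
            have hqjM : q j ∈ M :=
              (le_sup_right.trans hMle) (Ideal.mem_span_singleton_self (q j))
            have hone : (1 : R) ∉ M := fun h =>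
              hMmax.ne_top ((Ideal.eq_top_iff_one M).mpr h)
            have hja : j ≠ a := fun h => ha (h ▸ hjs)
            by_cases hPM : P ≤ M
            · obtain ⟨l, -, hlM⟩ := (hMmax.isPrime.inf_le').mp hPM
              rcases eq_or_ne l j with rfl | hlj
              · -- I j ≤ M : then qa ≡ 1 mod M
                have hsub : qa - 1 ∈ M := by
                  have : qa - 1 = (c a - 1) + t := by ring
                  rw [this]
                  exact M.add_mem (hlM (hcone a l hja)) (hPM htP)
                have := M.sub_mem hqaM hsub
                exact hone (by simpa using this)
              · -- I l ≤ M with l ≠ j : then q j ≡ 1 mod M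
                have hsub : q j - 1 ∈ M := hlM ((hmem j hjs).2 l hlj)
                have := M.sub_mem hqjM hsub
                exact hone (by simpa using this)
            · have hMF : M ∈ F := by
                rw [hF]
                simp only [Set.mem_iUnion, Set.mem_setOf_eq]
                exact ⟨j, hjs, hMmax, hqjM⟩
              have hMF2 : M ∈ F2 := by
                rw [hF2, Set.Finite.mem_toFinset]
                exact ⟨hMF, hPM⟩
              have hsub : qa - 1 ∈ M := by
                have : qa - 1 = t - (1 - c a) := by ring
                rw [this]
                exact htM M hMF2
              have := M.sub_mem hqaM hsub
              exact hone (by simpa using this)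
          intro i hi j hj hij
          rcases Finset.mem_insert.mp hi with rfl | his
          · rcases Finset.mem_insert.mp hj with rfl | hjs
            · exact absurd rfl hij
            · have hja : j ≠ i := fun h => ha (h ▸ hjs)
              rw [Function.update_self, Function.update_of_ne hja]
              exact main j hjs
          · rcases Finset.mem_insert.mp hj with rfl | hjs
            · have hia : i ≠ j := fun h => ha (h ▸ his)
              rw [Function.update_self, Function.update_of_ne hia]
              rw [add_comm]
              exact main i his
            · have hia : i ≠ a := fun h => ha (h ▸ his)
              have hja : j ≠ a := fun h => ha (h ▸ hjs)
              rw [Function.update_of_ne hia, Function.update_of_ne hja]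
              exact hpair i his j hjs hij
    obtain ⟨q, hqmem, hqpair⟩ := key Finset.univ
    exact ⟨q, fun i => (hqmem i (Finset.mem_univ i)).1,
      fun i j hij => hqpair i (Finset.mem_univ i) j (Finset.mem_univ j) hij⟩
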